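/- arXiv:1106.5756 — 3 statements merged into one kernel-verified Lean document; each statement's English description precedes it below -/
import Mathlib

section
/- Let ρ be a density matrix on ℂ^{d₁} ⊗ ℂ^{d₂} and let T_{ij} = tr(ρ (λ_i ⊗ μ_j)) for i = 1,…,d₁²−1, j = 1,…,d₂²−1 be its 2-body correlation tensor. Then Σ_{ij} T_{ij}² ≤ 4(d₁d₂ − 1)/(d₁d₂), with equality if and only if ρ is a maximally entangled pure state, i.e. ρ is pure and both of its reduced density matrices (partial traces over one factor) equal the maximally mixed states 𝕀_{d₁}/d₁ and 𝕀_{d₂}/d₂. -/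
/-!
Expand `ρ` in the basis `{𝟙, λᵢ} ⊗ {𝟙, μⱼ}` of all `d₁d₂ × d₁d₂` matrices, which is orthogonal
for `(A, B) ↦ tr (A B)`. Taking the "norm" of `ρ` in this basis gives the purity identity
`tr ρ² = 1/(d₁d₂) + ‖a‖²/(2d₂) + ‖b‖²/(2d₁) + ‖T‖²/4`, where `aᵢ = tr (ρ_A λᵢ)` and
`bⱼ = tr (ρ_B μⱼ)` are the Bloch vectors of the reduced states. A density matrix has
`tr ρ² ≤ (tr ρ)² = 1`, which gives the bound, with equality exactly when `tr ρ² = 1` and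
`a = b = 0`; expanding `ρ_A` and `ρ_B` in `{𝟙, λᵢ}` and `{𝟙, μⱼ}` shows that the vanishing of
the Bloch vectors means the reduced states are maximally mixed.
-/

open Matrix BigOperators ComplexOrder Kronecker

namespace Matrix

theorem IsHermitian.kronecker {R m n : Type*} [CommMagma R] [StarMul R] {A : Matrix m m R}
    {B : Matrix n n R} (hA : A.IsHermitian) (hB : B.IsHermitian) : (A ⊗ₖ B).IsHermitian := by
  rw [IsHermitian, conjTranspose_kronecker, hA.eq, hB.eq]

section Hermitian

variable {𝕜 n : Type*} [RCLike 𝕜] [Fintype n]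

theorem IsHermitian.ofReal_re_trace_mul {A B : Matrix n n ℂ} (hA : A.IsHermitian)
    (hB : B.IsHermitian) : ((A * B).trace.re : ℂ) = (A * B).trace := by
  rw [← Complex.conj_eq_iff_re, starRingEnd_apply, ← trace_conjTranspose, conjTranspose_mul,
    hA.eq, hB.eq, trace_mul_comm]

theorem IsHermitian.trace_mul_self_eq_sum_sq_eigenvalues [DecidableEq n] {A : Matrix n n 𝕜}
    (hA : A.IsHermitian) : (A * A).trace = ∑ i, (hA.eigenvalues i : 𝕜) ^ 2 := by
  conv_lhs => rw [hA.spectral_theorem, ← map_mul, Unitary.conjStarAlgAut_apply, trace_mul_cycle,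
    Unitary.coe_star_mul_self, Matrix.one_mul, diagonal_mul_diagonal, trace_diagonal]
  simp [sq]

theorem PosSemidef.re_trace_mul_self_le {A : Matrix n n 𝕜} (hA : A.PosSemidef) :
    RCLike.re (A * A).trace ≤ RCLike.re A.trace ^ 2 := by
  classical
  rw [hA.isHermitian.trace_mul_self_eq_sum_sq_eigenvalues,
    hA.isHermitian.trace_eq_sum_eigenvalues]
  simp only [map_sum, ← RCLike.ofReal_pow, RCLike.ofReal_re]
  exact Finset.sum_sq_le_sq_sum_of_nonneg fun i _ => hA.eigenvalues_nonneg i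

end Hermitian

section TraceOrthogonal

variable {𝕜 ι κ m n : Type*} [RCLike 𝕜] [DecidableEq ι] [DecidableEq κ] [Fintype m] [Fintype n]

def IsTraceOrthogonal (F : ι → Matrix n n 𝕜) (N : ι → ℝ) : Prop :=
  ∀ p q, (F p * F q).trace = if p = q then (N p : 𝕜) else 0

variable {F : ι → Matrix n n 𝕜} {N : ι → ℝ}

theorem IsTraceOrthogonal.trace_sum_smul_mul [Fintype ι] (hF : IsTraceOrthogonal F N)
    (c : ι → 𝕜) (q : ι) : ((∑ p, c p • F p) * F q).trace = c q * N q := by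
  simp [Finset.sum_mul, trace_sum, hF _ q]

theorem IsTraceOrthogonal.linearIndependent [Fintype ι] (hF : IsTraceOrthogonal F N)
    (hN : ∀ p, N p ≠ 0) : LinearIndependent 𝕜 F := by
  refine Fintype.linearIndependent_iff.mpr fun c hc p => ?_
  have := hF.trace_sum_smul_mul c p
  rw [hc, Matrix.zero_mul, trace_zero] at this
  simpa [hN p] using this.symm

theorem IsTraceOrthogonal.eq_sum_smul [Fintype ι] (hF : IsTraceOrthogonal F N)
    (hN : ∀ p, N p ≠ 0) (hcard : Fintype.card ι = Fintype.card n * Fintype.card n)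
    (M : Matrix n n 𝕜) : M = ∑ p, ((M * F p).trace / N p) • F p := by
  have hspan : Submodule.span 𝕜 (Set.range F) = ⊤ :=
    (hF.linearIndependent hN).span_eq_top_of_card_eq_finrank'
      (by simp [Module.finrank_matrix, hcard])
  obtain ⟨c, rfl⟩ := (Submodule.mem_span_range_iff_exists_fun 𝕜).mp
    (hspan ▸ Submodule.mem_top (x := M))
  congr! 2 with p
  rw [hF.trace_sum_smul_mul, mul_div_cancel_right₀ _ (by exact_mod_cast hN p)]

theorem IsTraceOrthogonal.trace_mul_self [Fintype ι] (hF : IsTraceOrthogonal F N)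
    (hN : ∀ p, N p ≠ 0) (hcard : Fintype.card ι = Fintype.card n * Fintype.card n)
    (M : Matrix n n 𝕜) : (M * M).trace = ∑ p, (M * F p).trace ^ 2 / N p := by
  conv_lhs => enter [1, 2]; rw [hF.eq_sum_smul hN hcard M]
  simp only [Finset.mul_sum, trace_sum, mul_smul_comm, trace_smul, smul_eq_mul]
  exact Finset.sum_congr rfl fun p _ => by ring

theorem IsTraceOrthogonal.re_trace_mul_self [Fintype ι] {F : ι → Matrix n n ℂ}
    (hF : IsTraceOrthogonal F N) (hN : ∀ p, N p ≠ 0)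
    (hcard : Fintype.card ι = Fintype.card n * Fintype.card n) (hFh : ∀ p, (F p).IsHermitian)
    {ρ : Matrix n n ℂ} (hρ : ρ.IsHermitian) :
    (ρ * ρ).trace.re = ∑ p, (ρ * F p).trace.re ^ 2 / N p := by
  rw [hF.trace_mul_self hN hcard, Complex.re_sum]
  refine Finset.sum_congr rfl fun p _ => ?_
  rw [← hρ.ofReal_re_trace_mul (hFh p)]
  simp [← Complex.ofReal_pow]

theorem IsTraceOrthogonal.kronecker {G : κ → Matrix m m 𝕜} {N' : κ → ℝ}
    (hF : IsTraceOrthogonal F N) (hG : IsTraceOrthogonal G N') :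
    IsTraceOrthogonal (fun p : ι × κ => F p.1 ⊗ₖ G p.2) (fun p => N p.1 * N' p.2) := by
  rintro ⟨i, k⟩ ⟨j, l⟩
  rw [← mul_kronecker_mul, trace_kronecker, hF, hG]
  by_cases hij : i = j <;> by_cases hkl : k = l <;> simp [hij, hkl]

theorem IsTraceOrthogonal.option_elim_one [DecidableEq n] (hF : IsTraceOrthogonal F N)
    (htr : ∀ i, (F i).trace = 0) :
    IsTraceOrthogonal (fun k : Option ι => k.elim 1 F) (fun k => k.elim (Fintype.card n) N) := by
  rintro (_ | i) (_ | j)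
  · simp
  · simpa using htr j
  · simpa using htr i
  · simpa using hF i j

end TraceOrthogonal

section PartialTrace

variable {R m n : Type*}

def partialTraceRight [AddCommMonoid R] [Fintype n] (ρ : Matrix (m × n) (m × n) R) :
    Matrix m m R :=
  of fun a b => ∑ c, ρ (a, c) (b, c)

def partialTraceLeft [AddCommMonoid R] [Fintype m] (ρ : Matrix (m × n) (m × n) R) :
    Matrix n n R :=
  of fun a b => ∑ c, ρ (c, a) (c, b)

theorem trace_partialTraceRight [AddCommMonoid R] [Fintype m] [Fintype n]
    (ρ : Matrix (m × n) (m × n) R) : (partialTraceRight ρ).trace = ρ.trace := by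
  simp [partialTraceRight, trace, Fintype.sum_prod_type]

theorem trace_partialTraceLeft [AddCommMonoid R] [Fintype m] [Fintype n]
    (ρ : Matrix (m × n) (m × n) R) : (partialTraceLeft ρ).trace = ρ.trace := by
  simp [partialTraceLeft, trace, Fintype.sum_prod_type_right]

theorem IsHermitian.partialTraceRight [AddCommMonoid R] [StarAddMonoid R] [Fintype n]
    {ρ : Matrix (m × n) (m × n) R} (hρ : ρ.IsHermitian) : (partialTraceRight ρ).IsHermitian := by
  ext a b
  simp [Matrix.partialTraceRight, star_sum, hρ.apply]

theorem IsHermitian.partialTraceLeft [AddCommMonoid R] [StarAddMonoid R] [Fintype m]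
    {ρ : Matrix (m × n) (m × n) R} (hρ : ρ.IsHermitian) : (partialTraceLeft ρ).IsHermitian := by
  ext a b
  simp [Matrix.partialTraceLeft, star_sum, hρ.apply]

theorem trace_mul_kronecker_one [CommSemiring R] [Fintype m] [Fintype n] [DecidableEq n]
    (ρ : Matrix (m × n) (m × n) R) (A : Matrix m m R) :
    (ρ * (A ⊗ₖ (1 : Matrix n n R))).trace = (partialTraceRight ρ * A).trace := by
  simp only [trace, diag_apply, mul_apply, kroneckerMap_apply, one_apply, mul_ite, mul_one,
    mul_zero, Fintype.sum_prod_type, Finset.sum_ite_eq', Finset.mem_univ, ↓reduceIte,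
    partialTraceRight, of_apply, Finset.sum_mul]
  exact Finset.sum_congr rfl fun _ _ => Finset.sum_comm

theorem trace_mul_one_kronecker [CommSemiring R] [Fintype m] [Fintype n] [DecidableEq m]
    (ρ : Matrix (m × n) (m × n) R) (B : Matrix n n R) :
    (ρ * ((1 : Matrix m m R) ⊗ₖ B)).trace = (partialTraceLeft ρ * B).trace := by
  simp only [trace, diag_apply, mul_apply, kroneckerMap_apply, one_apply, ite_mul, one_mul,
    zero_mul, mul_ite, mul_zero, Fintype.sum_prod_type, Finset.sum_ite_irrel,
    Finset.sum_const_zero, Finset.sum_ite_eq', Finset.mem_univ, ↓reduceIte, partialTraceLeft,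
    of_apply, Finset.sum_mul]
  exact Finset.sum_comm.trans (Finset.sum_congr rfl fun _ _ => Finset.sum_comm)

end PartialTrace

end Matrix

open Matrix

structure IsGellMannBasis {ι n : Type*} [Fintype ι] [DecidableEq ι] [Fintype n]
    (lam : ι → Matrix n n ℂ) : Prop where
  isHermitian : ∀ i, (lam i).IsHermitian
  trace_eq_zero : ∀ i, (lam i).trace = 0
  isTraceOrthogonal : IsTraceOrthogonal lam fun _ => 2
  card_add_one : Fintype.card ι + 1 = Fintype.card n ^ 2

namespace IsGellMannBasis

variable {ι n : Type*} [Fintype ι] [DecidableEq ι] [Fintype n] {lam : ι → Matrix n n ℂ}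

theorem card_ne_zero (h : IsGellMannBasis lam) : Fintype.card n ≠ 0 :=
  fun h0 => by simpa [h0] using h.card_add_one

theorem card_option (h : IsGellMannBasis lam) :
    Fintype.card (Option ι) = Fintype.card n * Fintype.card n := by
  rw [Fintype.card_option, h.card_add_one, sq]

theorem option_elim_ne_zero (h : IsGellMannBasis lam) (k : Option ι) :
    k.elim (Fintype.card n : ℝ) (fun _ => 2) ≠ 0 := by
  cases k <;> simp [h.card_ne_zero]

theorem isTraceOrthogonal_option_elim [DecidableEq n] (h : IsGellMannBasis lam) :
    IsTraceOrthogonal (fun k : Option ι => k.elim 1 lam)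
      (fun k => k.elim (Fintype.card n) fun _ => 2) :=
  h.isTraceOrthogonal.option_elim_one h.trace_eq_zero

theorem isHermitian_option_elim [DecidableEq n] (h : IsGellMannBasis lam) (k : Option ι) :
    (k.elim 1 lam).IsHermitian := by
  cases k
  exacts [isHermitian_one, h.isHermitian _]

theorem eq_smul_one_iff [DecidableEq n] (h : IsGellMannBasis lam) {M : Matrix n n ℂ}
    (hM : M.IsHermitian) (htr : M.trace = 1) :
    M = (Fintype.card n : ℂ)⁻¹ • 1 ↔ ∑ i, (M * lam i).trace.re ^ 2 = 0 := by
  rw [Finset.sum_eq_zero_iff_of_nonneg fun i _ => sq_nonneg _]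
  simp only [Finset.mem_univ, true_imp_iff, sq_eq_zero_iff]
  constructor
  · rintro rfl i
    simp [h.trace_eq_zero]
  · intro hre
    have hzero : ∀ i, (M * lam i).trace = 0 := fun i => by
      rw [← hM.ofReal_re_trace_mul (h.isHermitian i), hre i, Complex.ofReal_zero]
    rw [h.isTraceOrthogonal_option_elim.eq_sum_smul h.option_elim_ne_zero h.card_option M,
      Fintype.sum_option]
    simp [htr, hzero]

theorem re_trace_mul_self_eq [DecidableEq n] {κ m : Type*} [Fintype κ] [DecidableEq κ]
    [Fintype m] [DecidableEq m] {mu : κ → Matrix m m ℂ} (hlam : IsGellMannBasis lam)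
    (hmu : IsGellMannBasis mu) {ρ : Matrix (n × m) (n × m) ℂ} (hρ : ρ.IsHermitian)
    (htr : ρ.trace = 1) :
    (ρ * ρ).trace.re = 1 / (Fintype.card n * Fintype.card m)
      + (∑ i, (partialTraceRight ρ * lam i).trace.re ^ 2) / (2 * Fintype.card m)
      + (∑ j, (partialTraceLeft ρ * mu j).trace.re ^ 2) / (2 * Fintype.card n)
      + (∑ i, ∑ j, (ρ * (lam i ⊗ₖ mu j)).trace.re ^ 2) / 4 := by
  have hbasis := hlam.isTraceOrthogonal_option_elim.kronecker hmu.isTraceOrthogonal_option_elim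
  rw [hbasis.re_trace_mul_self
    (fun p => mul_ne_zero (hlam.option_elim_ne_zero _) (hmu.option_elim_ne_zero _))
    (by rw [Fintype.card_prod, hlam.card_option, hmu.card_option, Fintype.card_prod]; ring)
    (fun p => (hlam.isHermitian_option_elim _).kronecker (hmu.isHermitian_option_elim _)) hρ]
  simp only [Fintype.sum_prod_type, Fintype.sum_option, Option.elim_none, Option.elim_some,
    Matrix.mul_one, htr, trace_mul_kronecker_one, trace_mul_one_kronecker,
    trace_partialTraceRight, Complex.one_re, one_pow]
  simp only [Finset.sum_add_distrib, ← Finset.sum_div]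
  ring

end IsGellMannBasis

theorem le_and_eq_iff_of_purity_eq {P S A B a b : ℝ} (ha : 0 < a) (hb : 0 < b) (hA : 0 ≤ A)
    (hB : 0 ≤ B) (hP : P ≤ 1) (h : P = 1 / (a * b) + A / (2 * b) + B / (2 * a) + S / 4) :
    S ≤ 4 * (a * b - 1) / (a * b) ∧ (S = 4 * (a * b - 1) / (a * b) ↔ P = 1 ∧ A = 0 ∧ B = 0) := by
  have hA' : 0 ≤ 2 * A / b := by positivity
  have hB' : 0 ≤ 2 * B / a := by positivity
  have hgap : 4 * (a * b - 1) / (a * b) - S = 4 * (1 - P) + 2 * A / b + 2 * B / a := by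
    rw [h]
    field_simp
    ring
  refine ⟨by linarith, fun hS => ⟨by linarith, ?_, ?_⟩, fun ⟨hP1, hA0, hB0⟩ => ?_⟩
  · have : 2 * A / b = 0 := by linarith
    simpa [hb.ne'] using this
  · have : 2 * B / a = 0 := by linarith
    simpa [ha.ne'] using this
  · rw [hP1, hA0, hB0] at hgap
    simp only [sub_self, mul_zero, zero_div, add_zero, sub_eq_zero] at hgap
    exact hgap.symm

/-- For a density matrix `ρ` on `ℂ^{d₁} ⊗ ℂ^{d₂}` with 2-body
correlation tensor `T_{ij} = tr(ρ (λ_i ⊗ μ_j))`, one has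
`Σ_{ij} T_{ij}² ≤ 4(d₁d₂-1)/(d₁d₂)`, with equality iff `ρ` is a maximally
entangled pure state (pure with both reduced states maximally mixed). -/
theorem twoBody_correlation_norm_bound
    (d₁ d₂ : ℕ) (hd₁ : 2 ≤ d₁) (hd₂ : 2 ≤ d₂)
    (lam : Fin (d₁ ^ 2 - 1) → Matrix (Fin d₁) (Fin d₁) ℂ)
    (mu : Fin (d₂ ^ 2 - 1) → Matrix (Fin d₂) (Fin d₂) ℂ)
    (hlam_herm : ∀ i, (lam i).IsHermitian)
    (hlam_tr : ∀ i, (lam i).trace = 0)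
    (hlam_orth : ∀ m n, (lam m * lam n).trace = if m = n then 2 else 0)
    (hmu_herm : ∀ j, (mu j).IsHermitian)
    (hmu_tr : ∀ j, (mu j).trace = 0)
    (hmu_orth : ∀ m n, (mu m * mu n).trace = if m = n then 2 else 0)
    (ρ : Matrix (Fin d₁ × Fin d₂) (Fin d₁ × Fin d₂) ℂ)
    (hρ : ρ.PosSemidef) (hρtr : ρ.trace = 1) :
    (∑ i, ∑ j, ((ρ * (lam i ⊗ₖ mu j)).trace.re) ^ 2) ≤
        4 * ((d₁ : ℝ) * d₂ - 1) / ((d₁ : ℝ) * d₂) ∧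
    ((∑ i, ∑ j, ((ρ * (lam i ⊗ₖ mu j)).trace.re) ^ 2) =
        4 * ((d₁ : ℝ) * d₂ - 1) / ((d₁ : ℝ) * d₂) ↔
      ((ρ * ρ).trace = 1 ∧
        (Matrix.of fun a b : Fin d₁ => ∑ c, ρ (a, c) (b, c)) =
          ((d₁ : ℂ))⁻¹ • (1 : Matrix (Fin d₁) (Fin d₁) ℂ) ∧
        (Matrix.of fun a b : Fin d₂ => ∑ c, ρ (c, a) (c, b)) =
          ((d₂ : ℂ))⁻¹ • (1 : Matrix (Fin d₂) (Fin d₂) ℂ))) := by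
  have hlam : IsGellMannBasis lam :=
    ⟨hlam_herm, hlam_tr, fun i j => by simpa using hlam_orth i j,
      by simpa using Nat.sub_add_cancel (Nat.one_le_pow 2 d₁ (by omega))⟩
  have hmu : IsGellMannBasis mu :=
    ⟨hmu_herm, hmu_tr, fun i j => by simpa using hmu_orth i j,
      by simpa using Nat.sub_add_cancel (Nat.one_le_pow 2 d₂ (by omega))⟩
  have hρH := hρ.isHermitian
  have hA := hlam.eq_smul_one_iff hρH.partialTraceRight (by rw [trace_partialTraceRight, hρtr])
  have hB := hmu.eq_smul_one_iff hρH.partialTraceLeft (by rw [trace_partialTraceLeft, hρtr])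
  have hpurity := hlam.re_trace_mul_self_eq hmu hρH hρtr
  have hle : (ρ * ρ).trace.re ≤ 1 := by simpa [hρtr] using hρ.re_trace_mul_self_le
  simp only [Fintype.card_fin] at hpurity hA hB
  change _ ∧ (_ ↔ _ ∧ partialTraceRight ρ = _ ∧ partialTraceLeft ρ = _)
  rw [hA, hB, ← hρH.ofReal_re_trace_mul hρH, Complex.ofReal_eq_one]
  exact le_and_eq_iff_of_purity_eq (by positivity) (by positivity) (by positivity)
    (by positivity) hle hpurity
end

section
/- A pure state ρ = |ψ⟩⟨ψ| on ℂ^{d₁} ⊗ ℂ^{d₂} is a product state (i.e. |ψ⟩ = |ψ₁⟩ ⊗ |ψ₂⟩ for some unit vectors ψ₁ ∈ ℂ^{d₁}, ψ₂ ∈ ℂ^{d₂}) if and only if its 2-body correlation tensor factorizes into its 1-body correlation tensors, i.e. tr(ρ (λ_i ⊗ μ_j)) = tr(ρ (λ_i ⊗ 𝕀)) · tr(ρ (𝕀 ⊗ μ_j)) for all i = 1,…,d₁²−1 and j = 1,…,d₂²−1. -/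
/-!
Together with `𝕀`, the `λ_i` are orthogonal for the trace form `(A, B) ↦ tr (A B)` and there are
`d₁²` of them, so they span all `d₁ × d₁` matrices; likewise for `𝕀` and the `μ_j`. Both sides of
the factorization identity `tr(ρ (M ⊗ N)) = tr(ρ (M ⊗ 𝕀)) · tr(ρ (𝕀 ⊗ N))` are bilinear in
`(M, N)` and it holds trivially when `M` or `N` is `𝕀` (as `tr ρ = 1`), so it holds for all `M, N`. Testing it on matrix units gives
`ψ(a, b) · conj ψ(p₀) = F(a) · G(b)` for a fixed `p₀` with `ψ(p₀) ≠ 0`, so `ψ` is a product vector,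
which is then rescaled to a product of unit vectors. Conversely, for `ψ = ψ₁ ⊗ ψ₂` the state is
`ρ₁ ⊗ ρ₂` with `tr ρ₁ = tr ρ₂ = 1`, and traces of Kronecker products multiply.
-/

open Matrix BigOperators Kronecker

theorem LinearMap.ext_on_span₂ {R M N P : Type*} [CommSemiring R] [AddCommMonoid M]
    [AddCommMonoid N] [AddCommMonoid P] [Module R M] [Module R N] [Module R P]
    {s : Set M} {t : Set N} {f g : M →ₗ[R] N →ₗ[R] P}
    (hs : Submodule.span R s = ⊤) (ht : Submodule.span R t = ⊤)
    (h : ∀ x ∈ s, ∀ y ∈ t, f x y = g x y) : f = g :=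
  LinearMap.ext_on hs fun x hx => LinearMap.ext_on ht fun y hy => h x hx y hy

namespace Matrix

variable {K : Type*} {m n : Type*}

theorem trace_mul_kronecker_eq_mul_of_span [CommSemiring K] [Fintype m] [DecidableEq m]
    [Fintype n] [DecidableEq n] {ρ : Matrix (m × n) (m × n) K} (hρ : ρ.trace = 1)
    {ι κ : Type*} {u : ι → Matrix m m K} {v : κ → Matrix n n K}
    (hu : Submodule.span K (insert 1 (Set.range u)) = ⊤)
    (hv : Submodule.span K (insert 1 (Set.range v)) = ⊤)
    (h : ∀ i j, (ρ * (u i ⊗ₖ v j)).trace = (ρ * (u i ⊗ₖ 1)).trace * (ρ * (1 ⊗ₖ v j)).trace)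
    (M : Matrix m m K) (N : Matrix n n K) :
    (ρ * (M ⊗ₖ N)).trace = (ρ * (M ⊗ₖ 1)).trace * (ρ * (1 ⊗ₖ N)).trace := by
  let expect : Matrix m m K →ₗ[K] Matrix n n K →ₗ[K] K :=
    (kroneckerBilinear (R := K)).compr₂ (traceLinearMap _ K K ∘ₗ LinearMap.mulLeft K ρ)
  have expect_apply (A : Matrix m m K) (B : Matrix n n K) :
      expect A B = (ρ * (A ⊗ₖ B)).trace := rfl
  suffices expect = (LinearMap.mul K K).compl₁₂ (expect.flip 1) (expect 1) from
    congr($this M N)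
  refine LinearMap.ext_on_span₂ hu hv ?_
  rintro _ (rfl | ⟨i, rfl⟩) _ (rfl | ⟨j, rfl⟩) <;> simp [expect_apply, hρ, h]

section Field

variable [Field K] [Fintype m] [DecidableEq m] [Fintype n] [DecidableEq n]

theorem span_insert_one_range_eq_top_of_trace_orthogonal [CharZero K] {ι : Type*} [Fintype ι]
    (v : ι → Matrix n n K) (hcard : Fintype.card ι + 1 = Fintype.card n ^ 2)
    (htr : ∀ i, (v i).trace = 0) (horth : ∀ i j, i ≠ j → (v i * v j).trace = 0)
    (hsq : ∀ i, (v i * v i).trace ≠ 0) :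
    Submodule.span K (insert 1 (Set.range v)) = ⊤ := by
  let traceForm := (LinearMap.mul K (Matrix n n K)).compr₂ (traceLinearMap n K K)
  let w : Option ι → Matrix n n K := fun o => o.elim 1 v
  have hcard_n : (Fintype.card n : K) ≠ 0 := by
    have : Fintype.card n ≠ 0 := by rintro h; simp [h] at hcard
    exact_mod_cast this
  have hw : LinearIndependent K w := by
    refine LinearMap.linearIndependent_of_isOrthoᵢ (B := traceForm) ?_ ?_
    · rintro (_ | i) (_ | j) hij <;> simp_all [traceForm, w, Function.onFun]
    · rintro (_ | i) <;> simp [traceForm, w, hcard_n, hsq]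
  rw [← Option.range_elim]
  exact hw.span_eq_top_of_card_eq_finrank' (by simp [hcard, Module.finrank_matrix, sq])

theorem span_insert_one_range_eq_top_of_trace_mul_eq_ite [CharZero K] {d : ℕ} (hd : 1 ≤ d)
    (v : Fin (d ^ 2 - 1) → Matrix (Fin d) (Fin d) K) (htr : ∀ i, (v i).trace = 0)
    (horth : ∀ i j, (v i * v j).trace = if i = j then 2 else 0) :
    Submodule.span K (insert 1 (Set.range v)) = ⊤ :=
  span_insert_one_range_eq_top_of_trace_orthogonal v
    (by simpa using Nat.sub_add_cancel (Nat.one_le_pow 2 d hd)) htr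
    (fun i j hij => by simp [horth, hij]) (fun i => by simp [horth])

theorem exists_eq_mul_of_trace_vecMulVec_mul_kronecker_eq_mul [StarRing K] {ψ : m × n → K}
    (hψ : ψ ≠ 0)
    (h : ∀ (M : Matrix m m K) (N : Matrix n n K),
      (vecMulVec ψ (star ψ) * (M ⊗ₖ N)).trace =
        (vecMulVec ψ (star ψ) * (M ⊗ₖ 1)).trace * (vecMulVec ψ (star ψ) * (1 ⊗ₖ N)).trace) :
    ∃ (f : m → K) (g : n → K), ψ = fun p => f p.1 * g p.2 := by
  obtain ⟨p₀, hp₀⟩ := Function.ne_iff.mp hψ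
  -- Tested against the matrix unit `E_{p₀ p}`, the left-hand side is `ψ p * star (ψ p₀)`.
  have entry (p : m × n) := h (single p₀.1 p.1 1) (single p₀.2 p.2 1)
  refine ⟨fun a => (vecMulVec ψ (star ψ) * (single p₀.1 a 1 ⊗ₖ 1)).trace / star (ψ p₀),
    fun b => (vecMulVec ψ (star ψ) * (1 ⊗ₖ single p₀.2 b 1)).trace, funext fun p => ?_⟩
  rw [div_mul_eq_mul_div, ← entry, eq_div_iff (star_ne_zero.mpr hp₀), single_kronecker_single]
  simp [trace_mul_single, vecMulVec_apply]

end Field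

theorem vecMulVec_kronecker_vecMulVec [CommSemigroup K] (a c : m → K) (b d : n → K) :
    vecMulVec a c ⊗ₖ vecMulVec b d =
      vecMulVec (fun p => a p.1 * b p.2) (fun p => c p.1 * d p.2) := by
  ext ⟨i, j⟩ ⟨k, l⟩
  exact mul_mul_mul_comm ..

theorem trace_vecMulVec_star_self [Fintype n] (ψ : n → ℂ) :
    (vecMulVec ψ (star ψ)).trace = ((∑ x, Complex.normSq (ψ x) : ℝ) : ℂ) := by
  simp [dotProduct, Complex.mul_conj]

theorem trace_kronecker_mul_kronecker_eq_mul [CommSemiring K] [Fintype m] [Fintype n]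
    [DecidableEq m] [DecidableEq n] {A : Matrix m m K} {B : Matrix n n K}
    (hA : A.trace = 1) (hB : B.trace = 1) (M : Matrix m m K) (N : Matrix n n K) :
    (A ⊗ₖ B * (M ⊗ₖ N)).trace = (A ⊗ₖ B * (M ⊗ₖ 1)).trace * (A ⊗ₖ B * (1 ⊗ₖ N)).trace := by
  simp only [← mul_kronecker_mul, trace_kronecker, mul_one, hA, hB, one_mul]

end Matrix

theorem exists_normalized_factors_of_sum_normSq_eq_one {m n : Type*} [Fintype m] [Fintype n]
    {f : m → ℂ} {g : n → ℂ} (h : ∑ p : m × n, Complex.normSq (f p.1 * g p.2) = 1) :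
    ∃ (ψ₁ : m → ℂ) (ψ₂ : n → ℂ), (∑ x, Complex.normSq (ψ₁ x) = 1) ∧
      (∑ x, Complex.normSq (ψ₂ x) = 1) ∧
      (fun p : m × n => f p.1 * g p.2) = fun p => ψ₁ p.1 * ψ₂ p.2 := by
  set c := ∑ a, Complex.normSq (f a)
  have hprod : c * ∑ b, Complex.normSq (g b) = 1 := by
    simp only [c, Finset.sum_mul_sum, ← h, Fintype.sum_prod_type, Complex.normSq_mul]
  have hc : 0 < c := (Finset.sum_nonneg fun a _ => Complex.normSq_nonneg (f a)).lt_of_ne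
    fun hc : 0 = c => by rw [← hc, zero_mul] at hprod; exact zero_ne_one hprod
  have hsq : Complex.normSq (Real.sqrt c) = c := by
    rw [Complex.normSq_ofReal, Real.mul_self_sqrt hc.le]
  have hs : (Real.sqrt c : ℂ) ≠ 0 := by exact_mod_cast (Real.sqrt_pos.mpr hc).ne'
  refine ⟨fun a => f a / Real.sqrt c, fun b => Real.sqrt c * g b, ?_, ?_, ?_⟩
  · simp only [Complex.normSq_div, hsq, ← Finset.sum_div, div_self hc.ne', c]
  · simp only [Complex.normSq_mul, hsq, ← Finset.mul_sum, hprod]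
  · funext p
    field_simp

theorem pure_product_iff_correlation_factorizes_general
    (d₁ d₂ : ℕ) (hd₁ : 2 ≤ d₁) (hd₂ : 2 ≤ d₂)
    (lam : Fin (d₁ ^ 2 - 1) → Matrix (Fin d₁) (Fin d₁) ℂ)
    (mu : Fin (d₂ ^ 2 - 1) → Matrix (Fin d₂) (Fin d₂) ℂ)
    (hlam_tr : ∀ i, (lam i).trace = 0)
    (hlam_orth : ∀ m n, (lam m * lam n).trace = if m = n then 2 else 0)
    (hmu_tr : ∀ j, (mu j).trace = 0)
    (hmu_orth : ∀ m n, (mu m * mu n).trace = if m = n then 2 else 0)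
    (ψ : Fin d₁ × Fin d₂ → ℂ) (hψ : ∑ x, Complex.normSq (ψ x) = 1)
    (ρ : Matrix (Fin d₁ × Fin d₂) (Fin d₁ × Fin d₂) ℂ)
    (hρ : ρ = Matrix.vecMulVec ψ (star ψ)) :
    (∃ (ψ₁ : Fin d₁ → ℂ) (ψ₂ : Fin d₂ → ℂ),
        (∑ x, Complex.normSq (ψ₁ x) = 1) ∧ (∑ x, Complex.normSq (ψ₂ x) = 1) ∧
        ψ = fun p => ψ₁ p.1 * ψ₂ p.2) ↔
    (∀ i j, (ρ * (lam i ⊗ₖ mu j)).trace =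
        (ρ * (lam i ⊗ₖ (1 : Matrix (Fin d₂) (Fin d₂) ℂ))).trace *
        (ρ * ((1 : Matrix (Fin d₁) (Fin d₁) ℂ) ⊗ₖ mu j)).trace) := by
  subst hρ
  constructor
  · rintro ⟨ψ₁, ψ₂, h₁, h₂, rfl⟩ i j
    have hstar : star (fun p : Fin d₁ × Fin d₂ => ψ₁ p.1 * ψ₂ p.2) =
        fun p => star ψ₁ p.1 * star ψ₂ p.2 := by
      funext p
      simp
    rw [hstar, ← vecMulVec_kronecker_vecMulVec]
    exact trace_kronecker_mul_kronecker_eq_mul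
      (by rw [trace_vecMulVec_star_self, h₁, Complex.ofReal_one])
      (by rw [trace_vecMulVec_star_self, h₂, Complex.ofReal_one]) _ _
  · intro hcorr
    have hψ0 : ψ ≠ 0 := by rintro rfl; simp at hψ
    have hfactor := trace_mul_kronecker_eq_mul_of_span
      (by rw [trace_vecMulVec_star_self, hψ, Complex.ofReal_one])
      (span_insert_one_range_eq_top_of_trace_mul_eq_ite (by omega) lam hlam_tr hlam_orth)
      (span_insert_one_range_eq_top_of_trace_mul_eq_ite (by omega) mu hmu_tr hmu_orth) hcorr
    obtain ⟨f, g, rfl⟩ := exists_eq_mul_of_trace_vecMulVec_mul_kronecker_eq_mul hψ0 hfactor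
    exact exists_normalized_factors_of_sum_normSq_eq_one hψ

/-- A pure state `ρ = |ψ⟩⟨ψ|` on `ℂ^{d₁} ⊗ ℂ^{d₂}` is a product
state iff its 2-body correlation tensor factorizes into its 1-body correlation
tensors: `tr(ρ(λ_i ⊗ μ_j)) = tr(ρ(λ_i ⊗ 𝕀)) · tr(ρ(𝕀 ⊗ μ_j))` for all `i, j`. -/
theorem pure_product_iff_correlation_factorizes
    (d₁ d₂ : ℕ) (hd₁ : 2 ≤ d₁) (hd₂ : 2 ≤ d₂)
    (lam : Fin (d₁ ^ 2 - 1) → Matrix (Fin d₁) (Fin d₁) ℂ)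
    (mu : Fin (d₂ ^ 2 - 1) → Matrix (Fin d₂) (Fin d₂) ℂ)
    (hlam_herm : ∀ i, (lam i).IsHermitian)
    (hlam_tr : ∀ i, (lam i).trace = 0)
    (hlam_orth : ∀ m n, (lam m * lam n).trace = if m = n then 2 else 0)
    (hmu_herm : ∀ j, (mu j).IsHermitian)
    (hmu_tr : ∀ j, (mu j).trace = 0)
    (hmu_orth : ∀ m n, (mu m * mu n).trace = if m = n then 2 else 0)
    (ψ : Fin d₁ × Fin d₂ → ℂ) (hψ : ∑ x, Complex.normSq (ψ x) = 1)
    (ρ : Matrix (Fin d₁ × Fin d₂) (Fin d₁ × Fin d₂) ℂ)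
    (hρ : ρ = Matrix.vecMulVec ψ (star ψ)) :
    (∃ (ψ₁ : Fin d₁ → ℂ) (ψ₂ : Fin d₂ → ℂ),
        (∑ x, Complex.normSq (ψ₁ x) = 1) ∧ (∑ x, Complex.normSq (ψ₂ x) = 1) ∧
        ψ = fun p => ψ₁ p.1 * ψ₂ p.2) ↔
    (∀ i j, (ρ * (lam i ⊗ₖ mu j)).trace =
        (ρ * (lam i ⊗ₖ (1 : Matrix (Fin d₂) (Fin d₂) ℂ))).trace *
        (ρ * ((1 : Matrix (Fin d₁) (Fin d₁) ℂ) ⊗ₖ mu j)).trace) :=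
  pure_product_iff_correlation_factorizes_general d₁ d₂ hd₁ hd₂ lam mu hlam_tr hlam_orth hmu_tr
    hmu_orth ψ hψ ρ hρ
end

section
/- Let ρ = |Ψ⟩⟨Ψ| be a pure state on (ℂ^d)^{⊗3} that is a product across some bipartition of the three subsystems, i.e. (up to a permutation of the factors) |Ψ⟩ = |φ⟩ ⊗ |χ⟩ with φ a unit vector in one factor ℂ^d and χ a unit vector in the tensor product of the other two. Then its full correlation tensor T_{i₁i₂i₃} = tr(ρ (λ_{i₁} ⊗ λ_{i₂} ⊗ λ_{i₃})), i_j ∈ {1,…,d²−1}, satisfies ‖T‖ := (Σ_{i₁i₂i₃} T_{i₁i₂i₃}²)^{1/2} ≤ √(8(d−1)(d²−1)/d³). -/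
open Matrix BigOperators

noncomputable section

/-- The tensor (Kronecker) product of `n` local operators, acting on
`(ℂ^d)^{⊗n}` with the Hilbert space indexed by functions `Fin n → Fin d`. -/
def tensorOp {n d : ℕ} (A : Fin n → Matrix (Fin d) (Fin d) ℂ) :
    Matrix (Fin n → Fin d) (Fin n → Fin d) ℂ :=
  fun r c => ∏ j, A j (r j) (c j)

/-!
For a product vector `Ψ = φ ⊗ χ` the correlation tensor factorises: writing
`(a, b, c) = (i_j, i_{j+1}, i_{j+2})`,
`tr(ρ (λ_a ⊗ λ_b ⊗ λ_c)) = tr(|φ⟩⟨φ| λ_a) · tr(|χ⟩⟨χ| (λ_b ⊗ λ_c))`.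
Bounding the real part by the modulus, `‖T‖²` is at most the product of
`∑ₐ |tr(|φ⟩⟨φ| λₐ)|²` and `∑_{b,c} |tr(|χ⟩⟨χ| (λ_b ⊗ λ_c))|²`. Both are Bessel sums for the
Hilbert–Schmidt inner product: the `λₐ` (resp. `λ_b ⊗ λ_c`) are orthogonal of squared norm `K = 2`
(resp. `K = 4`) and orthogonal to the identity, so for a pure state `σ` on `ℂᴺ` the sum is at most
`K (tr σ² - (tr σ)² / N) = K (1 - 1 / N)`. Hence `‖T‖² ≤ 2 (1 - 1/d) · 4 (1 - 1/d²)`.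
-/

open scoped Kronecker

def finThreeRotEquiv {α : Type*} (j : Fin 3) : (Fin 3 → α) ≃ α × α × α where
  toFun r := (r j, r (j + 1), r (j + 2))
  invFun t k := ![t.1, t.2.1, t.2.2] (k - j)
  left_inv r := by funext k; fin_cases j <;> fin_cases k <;> rfl
  right_inv t := by fin_cases j <;> rfl

@[simp]
theorem finThreeRotEquiv_apply {α : Type*} (j : Fin 3) (r : Fin 3 → α) :
    finThreeRotEquiv j r = (r j, r (j + 1), r (j + 2)) := rfl

theorem sum_fin_three_rot_mul {κ R : Type*} [Fintype κ] [CommSemiring R] (j : Fin 3)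
    (f : κ → R) (g : κ → κ → R) :
    ∑ i₁, ∑ i₂, ∑ i₃, f (![i₁, i₂, i₃] j) * g (![i₁, i₂, i₃] (j + 1)) (![i₁, i₂, i₃] (j + 2)) =
      (∑ i, f i) * ∑ i, ∑ i', g i i' := by
  simp only [Finset.sum_mul_sum]
  fin_cases j <;> simp only [Finset.mul_sum] <;>
    simp only [Fin.zero_eta, Fin.mk_one, Fin.reduceFinMk, Fin.isValue, Fin.reduceAdd, zero_add,
      cons_val_zero, cons_val_one, cons_val]
  · rw [Finset.sum_comm]
    refine Finset.sum_congr rfl fun _ _ => ?_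
    rw [Finset.sum_comm]
  · symm
    rw [Finset.sum_comm]
    refine Finset.sum_congr rfl fun _ _ => ?_
    rw [Finset.sum_comm]

theorem Matrix.trace_submatrix_equiv {m n R : Type*} [Fintype m] [Fintype n] [AddCommMonoid R]
    (A : Matrix n n R) (e : m ≃ n) : (A.submatrix e e).trace = A.trace :=
  e.sum_comp A.diag

theorem tensorOp_eq_submatrix_kronecker {d : ℕ} (A : Fin 3 → Matrix (Fin d) (Fin d) ℂ)
    (j : Fin 3) :
    tensorOp A = (A j ⊗ₖ (A (j + 1) ⊗ₖ A (j + 2))).submatrix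
      (finThreeRotEquiv j) (finThreeRotEquiv j) := by
  ext r c
  fin_cases j <;> simp [tensorOp, Fin.prod_univ_three] <;> ring

theorem vecMulVec_star_eq_submatrix_kronecker {ι α β R : Type*} [CommMonoid R] [StarMul R]
    (e : ι ≃ α × β) (φ : α → R) (χ : β → R) (Ψ : ι → R)
    (hΨ : ∀ r, Ψ r = φ (e r).1 * χ (e r).2) :
    vecMulVec Ψ (star Ψ) = (vecMulVec φ (star φ) ⊗ₖ vecMulVec χ (star χ)).submatrix e e := by
  ext r c
  simp [vecMulVec_apply, hΨ, star_mul', mul_mul_mul_comm]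

section InnerProductSpace

variable {𝕜 E : Type*} [RCLike 𝕜] [NormedAddCommGroup E] [InnerProductSpace 𝕜 E]

theorem sum_norm_inner_sq_le_of_inner_eq_ite {κ : Type*} [Fintype κ] [DecidableEq κ]
    {K : ℝ} (hK : 0 < K) {v : κ → E}
    (hv : ∀ p q, inner 𝕜 (v p) (v q) = if p = q then (K : 𝕜) else 0) (x : E) :
    ∑ i, ‖inner 𝕜 (v i) x‖ ^ 2 ≤ K * ‖x‖ ^ 2 := by
  set s : ℝ := (Real.sqrt K)⁻¹
  have hs : s * s * K = 1 := by
    rw [← mul_inv, Real.mul_self_sqrt hK.le, inv_mul_cancel₀ hK.ne']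
  have hw : Orthonormal 𝕜 fun i => (s : 𝕜) • v i := by
    rw [orthonormal_iff_ite]
    intro p q
    rw [inner_smul_left, inner_smul_right, hv, RCLike.conj_ofReal]
    split_ifs
    · rw [← mul_assoc]; exact_mod_cast hs
    · simp
  have hbessel := hw.sum_inner_products_le x (s := Finset.univ)
  simp only [inner_smul_left, RCLike.conj_ofReal, norm_mul, mul_pow, RCLike.norm_ofReal,
    sq_abs, ← Finset.mul_sum] at hbessel
  calc ∑ i, ‖inner 𝕜 (v i) x‖ ^ 2 = K * (s ^ 2 * ∑ i, ‖inner 𝕜 (v i) x‖ ^ 2) := by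
        rw [← mul_assoc, mul_comm K, sq, hs, one_mul]
    _ ≤ K * ‖x‖ ^ 2 := by gcongr

end InnerProductSpace

section Frobenius

variable {𝕜 m n : Type*} [RCLike 𝕜]

def frobeniusVec (A : Matrix m n 𝕜) : EuclideanSpace 𝕜 (m × n) :=
  WithLp.toLp 2 fun p => A p.1 p.2

theorem frobeniusVec_add (A B : Matrix m n 𝕜) :
    frobeniusVec (A + B) = frobeniusVec A + frobeniusVec B := rfl

variable [Fintype m] [Fintype n]

theorem inner_frobeniusVec (A B : Matrix m n 𝕜) :
    inner 𝕜 (frobeniusVec A) (frobeniusVec B) = (Aᴴ * B).trace := by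
  simp only [frobeniusVec, PiLp.inner_apply, RCLike.inner_apply, Fintype.sum_prod_type,
    trace, diag, mul_apply, conjTranspose_apply, RCLike.star_def]
  rw [Finset.sum_comm]
  simp only [mul_comm]

theorem norm_frobeniusVec_sq (A : Matrix m n 𝕜) :
    ‖frobeniusVec A‖ ^ 2 = RCLike.re (Aᴴ * A).trace := by
  rw [← inner_self_eq_norm_sq (𝕜 := 𝕜), inner_frobeniusVec]

end Frobenius

theorem Matrix.IsHermitian.kronecker_s4 {R m n : Type*} [CommMagma R] [StarMul R]
    {A : Matrix m m R} {B : Matrix n n R} (hA : A.IsHermitian) (hB : B.IsHermitian) :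
    (A ⊗ₖ B).IsHermitian := by
  rw [IsHermitian, conjTranspose_kronecker, hA.eq, hB.eq]

/-- Bessel's inequality for `σ - (tr σ / n) • 1`, the component of `σ` orthogonal to the identity
in the Hilbert–Schmidt inner product. -/
theorem sum_norm_trace_mul_sq_le {𝕜 ι κ : Type*} [RCLike 𝕜] [Fintype ι] [DecidableEq ι]
    [Nonempty ι] [Fintype κ] [DecidableEq κ] {K : ℝ} (hK : 0 < K) {L : κ → Matrix ι ι 𝕜}
    (hherm : ∀ i, (L i).IsHermitian) (htr : ∀ i, (L i).trace = 0)
    (horth : ∀ p q, (L p * L q).trace = if p = q then (K : 𝕜) else 0) (σ : Matrix ι ι 𝕜) :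
    ∑ i, ‖(σ * L i).trace‖ ^ 2 ≤
      K * (RCLike.re (σᴴ * σ).trace - ‖σ.trace‖ ^ 2 / Fintype.card ι) := by
  set c : 𝕜 := σ.trace / Fintype.card ι
  set M := σ - c • (1 : Matrix ι ι 𝕜)
  have hMtr : M.trace = 0 := by
    simp only [M, c, trace_sub, trace_smul, trace_one, smul_eq_mul]
    field_simp
    ring
  have hinner : ∀ i, inner 𝕜 (frobeniusVec (L i)) (frobeniusVec M) = (σ * L i).trace := by
    intro i
    rw [inner_frobeniusVec, (hherm i).eq, mul_sub, trace_sub, Matrix.mul_smul, trace_smul, mul_one,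
      htr, smul_zero, sub_zero, trace_mul_comm]
  have hnorm : ‖frobeniusVec M‖ ^ 2 =
      RCLike.re (σᴴ * σ).trace - ‖σ.trace‖ ^ 2 / Fintype.card ι := by
    have hσ : σ = M + c • 1 := (sub_add_cancel σ _).symm
    have horthogonal : inner 𝕜 (frobeniusVec M) (frobeniusVec (c • 1 : Matrix ι ι 𝕜)) = 0 := by
      rw [inner_frobeniusVec, Matrix.mul_smul, mul_one, trace_smul, trace_conjTranspose, hMtr,
        star_zero, smul_zero]
    have := norm_add_sq_eq_norm_sq_add_norm_sq_of_inner_eq_zero _ _ horthogonal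
    have hscalar : ‖frobeniusVec (c • 1 : Matrix ι ι 𝕜)‖ ^ 2 = ‖σ.trace‖ ^ 2 / Fintype.card ι := by
      rw [norm_frobeniusVec_sq]
      simp only [conjTranspose_smul, conjTranspose_one, Matrix.smul_mul, Matrix.mul_smul,
        Matrix.one_mul, smul_smul, trace_smul, trace_one, smul_eq_mul, RCLike.star_def,
        c]
      rw [RCLike.mul_conj, norm_div, RCLike.norm_natCast, ← RCLike.ofReal_pow, RCLike.re_ofReal_mul,
        RCLike.natCast_re]
      field_simp
    rw [← frobeniusVec_add, ← hσ, ← sq, ← sq, ← sq, norm_frobeniusVec_sq, hscalar] at this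
    linarith
  have horth' : ∀ p q, inner 𝕜 (frobeniusVec (L p)) (frobeniusVec (L q)) =
      if p = q then (K : 𝕜) else 0 := by
    intro p q
    rw [inner_frobeniusVec, (hherm p).eq, horth]
  calc ∑ i, ‖(σ * L i).trace‖ ^ 2
      = ∑ i, ‖inner 𝕜 (frobeniusVec (L i)) (frobeniusVec M)‖ ^ 2 := by simp only [hinner]
    _ ≤ K * ‖frobeniusVec M‖ ^ 2 := sum_norm_inner_sq_le_of_inner_eq_ite hK horth' _
    _ = _ := by rw [hnorm]

section PureState

variable {ι : Type*} {v : ι → ℂ}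

theorem isHermitian_vecMulVec_star (v : ι → ℂ) : (vecMulVec v (star v)).IsHermitian := by
  rw [IsHermitian, conjTranspose_vecMulVec, star_star]

variable [Fintype ι]

theorem dotProduct_star_self_eq_one (hv : ∑ x, Complex.normSq (v x) = 1) : v ⬝ᵥ star v = 1 := by
  simp only [dotProduct, Pi.star_apply, Complex.star_def, Complex.mul_conj]
  exact_mod_cast hv

theorem trace_vecMulVec_star (hv : ∑ x, Complex.normSq (v x) = 1) :
    (vecMulVec v (star v)).trace = 1 := by
  rw [trace_vecMulVec, dotProduct_star_self_eq_one hv]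

theorem vecMulVec_star_mul_self (hv : ∑ x, Complex.normSq (v x) = 1) :
    vecMulVec v (star v) * vecMulVec v (star v) = vecMulVec v (star v) := by
  rw [vecMulVec_mul_vecMulVec, dotProduct_comm, dotProduct_star_self_eq_one hv, one_smul]

theorem sum_norm_trace_vecMulVec_star_mul_sq_le [DecidableEq ι] [Nonempty ι] {κ : Type*}
    [Fintype κ] [DecidableEq κ] (hv : ∑ x, Complex.normSq (v x) = 1) {K : ℝ} (hK : 0 < K)
    {L : κ → Matrix ι ι ℂ} (hherm : ∀ i, (L i).IsHermitian) (htr : ∀ i, (L i).trace = 0)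
    (horth : ∀ p q, (L p * L q).trace = if p = q then (K : ℂ) else 0) :
    ∑ i, ‖(vecMulVec v (star v) * L i).trace‖ ^ 2 ≤ K * (1 - 1 / Fintype.card ι) := by
  have h := sum_norm_trace_mul_sq_le hK hherm htr horth (vecMulVec v (star v))
  rwa [(isHermitian_vecMulVec_star v).eq, vecMulVec_star_mul_self hv, trace_vecMulVec_star hv,
    norm_one, one_pow, RCLike.one_re] at h

end PureState

theorem trace_kronecker_mul_kronecker_eq_ite {ι κ R : Type*} [Fintype ι] [DecidableEq κ]
    [CommSemiring R] {L : κ → Matrix ι ι R} {K : R}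
    (horth : ∀ p q, (L p * L q).trace = if p = q then K else 0) (p q : κ × κ) :
    ((L p.1 ⊗ₖ L p.2) * (L q.1 ⊗ₖ L q.2)).trace = if p = q then K ^ 2 else 0 := by
  rw [← mul_kronecker_mul, trace_kronecker, horth, horth]
  by_cases h₁ : p.1 = q.1 <;> by_cases h₂ : p.2 = q.2 <;> simp [Prod.ext_iff, h₁, h₂, sq]

theorem sum_norm_trace_vecMulVec_star_mul_kronecker_sq_le {ι κ : Type*} [Fintype ι]
    [DecidableEq ι] [Nonempty ι] [Fintype κ] [DecidableEq κ] {χ : ι × ι → ℂ}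
    (hχ : ∑ x, Complex.normSq (χ x) = 1) {K : ℝ} (hK : 0 < K)
    {L : κ → Matrix ι ι ℂ} (hherm : ∀ i, (L i).IsHermitian) (htr : ∀ i, (L i).trace = 0)
    (horth : ∀ p q, (L p * L q).trace = if p = q then (K : ℂ) else 0) :
    ∑ m, ∑ n, ‖(vecMulVec χ (star χ) * (L m ⊗ₖ L n)).trace‖ ^ 2 ≤
      K ^ 2 * (1 - 1 / Fintype.card ι ^ 2) := by
  have h := sum_norm_trace_vecMulVec_star_mul_sq_le hχ (pow_pos hK 2)
    (L := fun p : κ × κ => L p.1 ⊗ₖ L p.2) (fun p => (hherm p.1).kronecker_s4 (hherm p.2))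
    (fun p => by simp [trace_kronecker, htr])
    (by simpa using trace_kronecker_mul_kronecker_eq_ite horth)
  rwa [Fintype.sum_prod_type, Fintype.card_prod, Nat.cast_mul, ← sq] at h

theorem trace_vecMulVec_star_mul_tensorOp {d : ℕ} (j : Fin 3) {φ : Fin d → ℂ}
    {χ : Fin d × Fin d → ℂ} {Ψ : (Fin 3 → Fin d) → ℂ}
    (hprod : ∀ r, Ψ r = φ (r j) * χ (r (j + 1), r (j + 2)))
    (A : Fin 3 → Matrix (Fin d) (Fin d) ℂ) :
    (vecMulVec Ψ (star Ψ) * tensorOp A).trace =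
      (vecMulVec φ (star φ) * A j).trace *
        (vecMulVec χ (star χ) * (A (j + 1) ⊗ₖ A (j + 2))).trace := by
  rw [vecMulVec_star_eq_submatrix_kronecker (finThreeRotEquiv j) φ χ Ψ hprod,
    tensorOp_eq_submatrix_kronecker A j, submatrix_mul_equiv, trace_submatrix_equiv,
    ← mul_kronecker_mul, trace_kronecker]

theorem sq_re_trace_vecMulVec_star_mul_tensorOp_le {d : ℕ} (j : Fin 3) {φ : Fin d → ℂ}
    {χ : Fin d × Fin d → ℂ} {Ψ : (Fin 3 → Fin d) → ℂ}
    (hprod : ∀ r, Ψ r = φ (r j) * χ (r (j + 1), r (j + 2)))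
    (A : Fin 3 → Matrix (Fin d) (Fin d) ℂ) :
    (vecMulVec Ψ (star Ψ) * tensorOp A).trace.re ^ 2 ≤
      ‖(vecMulVec φ (star φ) * A j).trace‖ ^ 2 *
        ‖(vecMulVec χ (star χ) * (A (j + 1) ⊗ₖ A (j + 2))).trace‖ ^ 2 := by
  rw [trace_vecMulVec_star_mul_tensorOp j hprod, ← mul_pow, ← norm_mul, ← sq_abs]
  exact pow_le_pow_left₀ (abs_nonneg _) (Complex.abs_re_le_norm _) 2

theorem biseparable_pure_full_correlation_norm_bound_general
    (d : ℕ) (hd : 2 ≤ d)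
    (lam : Fin (d ^ 2 - 1) → Matrix (Fin d) (Fin d) ℂ)
    (hherm : ∀ i, (lam i).IsHermitian)
    (htraceless : ∀ i, (lam i).trace = 0)
    (horth : ∀ m n, (lam m * lam n).trace = if m = n then 2 else 0)
    (Ψ : (Fin 3 → Fin d) → ℂ)
    (j : Fin 3) (φ : Fin d → ℂ) (χ : Fin d × Fin d → ℂ)
    (hφ : ∑ x, Complex.normSq (φ x) = 1)
    (hχ : ∑ x, Complex.normSq (χ x) = 1)
    (hprod : ∀ r, Ψ r = φ (r j) * χ (r (j + 1), r (j + 2)))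
    (ρ : Matrix (Fin 3 → Fin d) (Fin 3 → Fin d) ℂ)
    (hρ : ρ = Matrix.vecMulVec Ψ (star Ψ)) :
    Real.sqrt (∑ i₁, ∑ i₂, ∑ i₃,
        ((ρ * tensorOp ![lam i₁, lam i₂, lam i₃]).trace.re) ^ 2) ≤
      Real.sqrt (8 * ((d : ℝ) - 1) * ((d : ℝ) ^ 2 - 1) / (d : ℝ) ^ 3) := by
  subst hρ
  have : Nonempty (Fin d) := ⟨⟨0, by omega⟩⟩
  have horth' : ∀ m n, (lam m * lam n).trace = if m = n then ((2 : ℝ) : ℂ) else 0 := by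
    simpa using horth
  set a := fun m => ‖(vecMulVec φ (star φ) * lam m).trace‖ ^ 2
  set b := fun m n => ‖(vecMulVec χ (star χ) * (lam m ⊗ₖ lam n)).trace‖ ^ 2
  have ha : ∑ m, a m ≤ 2 * (1 - 1 / d) := by
    simpa using sum_norm_trace_vecMulVec_star_mul_sq_le hφ two_pos hherm htraceless horth'
  have hb : ∑ m, ∑ n, b m n ≤ 2 ^ 2 * (1 - 1 / d ^ 2) := by
    simpa using
      sum_norm_trace_vecMulVec_star_mul_kronecker_sq_le hχ two_pos hherm htraceless horth'
  have hterm (i₁ i₂ i₃) :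
      (vecMulVec Ψ (star Ψ) * tensorOp ![lam i₁, lam i₂, lam i₃]).trace.re ^ 2 ≤
        a (![i₁, i₂, i₃] j) * b (![i₁, i₂, i₃] (j + 1)) (![i₁, i₂, i₃] (j + 2)) := by
    have hlam : ![lam i₁, lam i₂, lam i₃] = fun k => lam (![i₁, i₂, i₃] k) := by
      funext k; fin_cases k <;> rfl
    rw [hlam]
    exact sq_re_trace_vecMulVec_star_mul_tensorOp_le j hprod _
  apply Real.sqrt_le_sqrt
  calc _ ≤ ∑ i₁, ∑ i₂, ∑ i₃,
          a (![i₁, i₂, i₃] j) * b (![i₁, i₂, i₃] (j + 1)) (![i₁, i₂, i₃] (j + 2)) := by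
        gcongr with i₁ _ i₂ _ i₃ _
        exact hterm i₁ i₂ i₃
    _ = (∑ m, a m) * ∑ m, ∑ n, b m n := sum_fin_three_rot_mul j a b
    _ ≤ (2 * (1 - 1 / d)) * (2 ^ 2 * (1 - 1 / d ^ 2)) := by
        gcongr
        exact (Finset.sum_nonneg fun m _ => by positivity).trans ha
    _ = 8 * ((d : ℝ) - 1) * ((d : ℝ) ^ 2 - 1) / (d : ℝ) ^ 3 := by
        field_simp
        ring

/-- If `ρ = |Ψ⟩⟨Ψ|` is a pure state on `(ℂ^d)^{⊗3}` which is a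
product across some bipartition `j | {j+1, j+2}` of the three subsystems
(this covers all three bipartitions, up to permutation of factors), then the
standard norm of its full correlation tensor satisfies
`‖T‖ ≤ √(8(d-1)(d²-1)/d³)`. -/
theorem biseparable_pure_full_correlation_norm_bound
    (d : ℕ) (hd : 2 ≤ d)
    (lam : Fin (d ^ 2 - 1) → Matrix (Fin d) (Fin d) ℂ)
    (hherm : ∀ i, (lam i).IsHermitian)
    (htraceless : ∀ i, (lam i).trace = 0)
    (horth : ∀ m n, (lam m * lam n).trace = if m = n then 2 else 0)
    (Ψ : (Fin 3 → Fin d) → ℂ)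
    (hΨunit : ∑ x, Complex.normSq (Ψ x) = 1)
    (j : Fin 3) (φ : Fin d → ℂ) (χ : Fin d × Fin d → ℂ)
    (hφ : ∑ x, Complex.normSq (φ x) = 1)
    (hχ : ∑ x, Complex.normSq (χ x) = 1)
    (hprod : ∀ r, Ψ r = φ (r j) * χ (r (j + 1), r (j + 2)))
    (ρ : Matrix (Fin 3 → Fin d) (Fin 3 → Fin d) ℂ)
    (hρ : ρ = Matrix.vecMulVec Ψ (star Ψ)) :
    Real.sqrt (∑ i₁, ∑ i₂, ∑ i₃,
        ((ρ * tensorOp ![lam i₁, lam i₂, lam i₃]).trace.re) ^ 2) ≤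
      Real.sqrt (8 * ((d : ℝ) - 1) * ((d : ℝ) ^ 2 - 1) / (d : ℝ) ^ 3) :=
  biseparable_pure_full_correlation_norm_bound_general d hd lam hherm htraceless horth Ψ j φ χ hφ hχ
    hprod ρ hρ
end
end
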